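/- arXiv:2509.23394 — 2 statements merged into one kernel-verified Lean document; each statement's English description precedes it below -/
import Mathlib

section
/- Let B be a bidirected graph rooted at r. Then B is edge-clean (i.e., r is not contained in any nontrivial trail-undirectable component) if and only if B contains no nontrivial trail that starts and ends at r with no internal vertex equal to r. -/
/-- A bidirected graph: a loopless multigraph together with a signing of each
half-edge (edge-endpoint incidence) by a sign (`true` = `+`, `false` = `-`). -/
structure BidirGraph (V : Type) (E : Type) where
  ends : E → V × V
  sign : E → V → Bool
  loopless : ∀ e : E, (ends e).1 ≠ (ends e).2

namespace BidirGraph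

variable {V E : Type}

/-- The head of an oriented edge `(e, b)`: `b = true` orients `e` from its first
endpoint to its second endpoint. -/
def ohead (B : BidirGraph V E) (oe : E × Bool) : V :=
  if oe.2 then (B.ends oe.1).2 else (B.ends oe.1).1

/-- The tail of an oriented edge. -/
def otail (B : BidirGraph V E) (oe : E × Bool) : V :=
  if oe.2 then (B.ends oe.1).1 else (B.ends oe.1).2

/-- `e` is incident with `v`. -/
def Incident (B : BidirGraph V E) (e : E) (v : V) : Prop :=
  (B.ends e).1 = v ∨ (B.ends e).2 = v

/-- `L` is a trail starting at `v`: a sequence of oriented edges, with no repeated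
underlying edge, consecutive edges sharing a vertex at which they have opposite signs. -/
def IsTrailFrom (B : BidirGraph V E) (v : V) (L : List (E × Bool)) : Prop :=
  (L.map Prod.fst).Nodup ∧
  (∀ oe ∈ L.head?, B.otail oe = v) ∧
  L.Chain' (fun a b => B.ohead a = B.otail b ∧ B.sign a.1 (B.ohead a) ≠ B.sign b.1 (B.ohead a))

/-- The final vertex of a trail starting at `v`. -/
def trailEnd (B : BidirGraph V E) (v : V) (L : List (E × Bool)) : V :=
  match L.getLast? with
  | none => v
  | some oe => B.ohead oe

/-- The internal vertices of a trail: the heads of all edges except the last one. -/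
def Internal (B : BidirGraph V E) (L : List (E × Bool)) : List V :=
  (L.map B.ohead).dropLast

/-- An `r`-trail: a trail starting at `r` with no internal vertex equal to `r`. -/
def IsRTrail (B : BidirGraph V E) (r : V) (L : List (E × Bool)) : Prop :=
  B.IsTrailFrom r L ∧ ∀ v ∈ B.Internal L, v ≠ r

/-- The trail `L` ends at vertex `w` with sign `α`. -/
def EndsAtSigned (B : BidirGraph V E) (L : List (E × Bool)) (w : V) (α : Bool) : Prop :=
  ∃ oe, L.getLast? = some oe ∧ B.ohead oe = w ∧ B.sign oe.1 w = α

/-- A path: a trail with no repeated vertex. -/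
def IsPathFrom (B : BidirGraph V E) (v : V) (L : List (E × Bool)) : Prop :=
  B.IsTrailFrom v L ∧ (v :: L.map B.ohead).Nodup

/-- An almost path: a trail that is trivial or becomes a path after removing its last edge. -/
def IsAlmostPathFrom (B : BidirGraph V E) (v : V) (L : List (E × Bool)) : Prop :=
  B.IsTrailFrom v L ∧ (v :: B.Internal L).Nodup

/-- An edge is trail-undirectable if there are `r`-trails ending in both of its orientations. -/
def TrailUndirectable (B : BidirGraph V E) (r : V) (e : E) : Prop :=
  (∃ L, B.IsRTrail r L ∧ L.getLast? = some (e, true)) ∧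
  (∃ L, B.IsRTrail r L ∧ L.getLast? = some (e, false))

/-- `(e, b)` is the natural orientation of the trail-directable edge `e`: `r`-trails end
in the orientation `(e, b)` but not in the opposite orientation. -/
def NatOrient (B : BidirGraph V E) (r : V) (e : E) (b : Bool) : Prop :=
  (∃ L, B.IsRTrail r L ∧ L.getLast? = some (e, b)) ∧
  ¬ ∃ L, B.IsRTrail r L ∧ L.getLast? = some (e, !b)

/-- An edge is trail-directable if exactly one of its orientations is the final oriented
edge of some `r`-trail. -/
def TrailDirectable (B : BidirGraph V E) (r : V) (e : E) : Prop :=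
  ∃ b, B.NatOrient r e b

/-- `B` is trail-reachable: every edge is the final edge of some `r`-trail. -/
def TrailReachable (B : BidirGraph V E) (r : V) : Prop :=
  ∀ e : E, ∃ L b, B.IsRTrail r L ∧ L.getLast? = some (e, b)

/-- Adjacency of trail-undirectable edges: both undirectable and sharing an endpoint. -/
def UStep (B : BidirGraph V E) (r : V) (a b : E) : Prop :=
  B.TrailUndirectable r a ∧ B.TrailUndirectable r b ∧ ∃ v, B.Incident a v ∧ B.Incident b v

/-- `C` is (the edge set of) a nontrivial trail-undirectable component of `B`: the set of
trail-undirectable edges connected to some trail-undirectable edge `e` inside the subgraph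
induced by the trail-undirectable edges. -/
def IsUComp (B : BidirGraph V E) (r : V) (C : Set E) : Prop :=
  ∃ e, B.TrailUndirectable r e ∧ C = {f | Relation.ReflTransGen (B.UStep r) e f}

/-- `v` is a vertex of the edge set `C` (i.e. an endpoint of one of its edges). -/
def VC (B : BidirGraph V E) (C : Set E) (v : V) : Prop :=
  ∃ e ∈ C, B.Incident e v

/-- `B` is edge-clean: the root lies in no nontrivial trail-undirectable component. -/
def EdgeClean (B : BidirGraph V E) (r : V) : Prop :=
  ¬ ∃ C : Set E, B.IsUComp r C ∧ B.VC C r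

/-- `B` is clean: there is no nontrivial almost path starting and ending at `r`. -/
def Clean (B : BidirGraph V E) (r : V) : Prop :=
  ¬ ∃ L, L ≠ ([] : List (E × Bool)) ∧ B.IsAlmostPathFrom r L ∧ B.trailEnd r L = r

/-- A vertex is trail-solid if it is the root, or the head of the natural orientation of a
trail-directable edge, or incident with no trail-undirectable edge. -/
def TrailSolid (B : BidirGraph V E) (r v : V) : Prop :=
  v = r ∨ (∃ e b, B.NatOrient r e b ∧ B.ohead (e, b) = v) ∨
    (∀ e : E, B.Incident e v → ¬ B.TrailUndirectable r e)

/-- Two trails are edge-disjoint if no underlying edge occurs in both. -/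
def EdgeDisj (L₁ L₂ : List (E × Bool)) : Prop :=
  ∀ (e : E) (b₁ b₂ : Bool), (e, b₁) ∈ L₁ → (e, b₂) ∈ L₂ → False

/-- Two paths are internally vertex-disjoint if they share no internal vertex. -/
def IntDisj (B : BidirGraph V E) (L₁ L₂ : List (E × Bool)) : Prop :=
  ∀ w : V, w ∈ B.Internal L₁ → w ∈ B.Internal L₂ → False

end BidirGraph

/-!
A nontrivial `r`-trail returning to `r`, read backwards, is again an `r`-trail, and it ends
in the reverse orientation of the first edge; that edge, incident with `r`, is therefore
trail-undirectable. Conversely, if an edge at `r` is trail-undirectable, the `r`-trail ending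
in its orientation towards `r` returns to `r`.
-/

namespace BidirGraph

variable {V E : Type} (B : BidirGraph V E)

def oflip (oe : E × Bool) : E × Bool := (oe.1, !oe.2)

@[simp]
lemma ohead_oflip (oe : E × Bool) : B.ohead (oflip oe) = B.otail oe := by
  obtain ⟨e, _ | _⟩ := oe <;> rfl

@[simp]
lemma otail_oflip (oe : E × Bool) : B.otail (oflip oe) = B.ohead oe := by
  obtain ⟨e, _ | _⟩ := oe <;> rfl

lemma incident_otail (oe : E × Bool) : B.Incident oe.1 (B.otail oe) := by
  obtain ⟨e, _ | _⟩ := oe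
  exacts [Or.inr rfl, Or.inl rfl]

lemma exists_ohead_eq_of_incident {e : E} {v : V} (h : B.Incident e v) :
    ∃ b, B.ohead (e, b) = v := by
  rcases h with h | h
  exacts [⟨false, h⟩, ⟨true, h⟩]

lemma trailEnd_of_getLast? {v : V} {L : List (E × Bool)} {oe : E × Bool}
    (h : L.getLast? = some oe) : B.trailEnd v L = B.ohead oe := by
  simp only [trailEnd, h]

def reverseTrail (L : List (E × Bool)) : List (E × Bool) := (L.map oflip).reverse

lemma getLast?_reverseTrail (L : List (E × Bool)) :
    (reverseTrail L).getLast? = L.head?.map oflip := by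
  rw [reverseTrail, List.getLast?_reverse, List.head?_map]

lemma map_otail_tail_eq_internal :
    ∀ {L : List (E × Bool)}, L.IsChain (fun a b => B.ohead a = B.otail b) →
      L.tail.map B.otail = B.Internal L
  | [], _ | [_], _ => rfl
  | a :: b :: T, h => by
    rw [List.isChain_cons_cons] at h
    have ih := map_otail_tail_eq_internal h.2
    simp only [Internal, List.tail_cons, List.map_cons, List.dropLast_cons_cons] at ih ⊢
    rw [← ih, h.1]

lemma internal_reverseTrail {L : List (E × Bool)}
    (h : L.IsChain (fun a b => B.ohead a = B.otail b)) :
    B.Internal (reverseTrail L) = (B.Internal L).reverse := by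
  have hmap : (L.map oflip).map B.ohead = L.map B.otail := by
    simp [List.map_map, Function.comp_def]
  rw [Internal, reverseTrail, List.map_reverse, hmap, List.dropLast_reverse, ← List.map_tail,
    B.map_otail_tail_eq_internal h]

lemma IsTrailFrom.reverseTrail {B : BidirGraph V E} {v : V} {L : List (E × Bool)}
    (h : B.IsTrailFrom v L) : B.IsTrailFrom (B.trailEnd v L) (reverseTrail L) := by
  obtain ⟨hnd, -, hchain⟩ := h
  refine ⟨?_, ?_, ?_⟩
  · simpa [BidirGraph.reverseTrail, oflip, List.map_reverse, Function.comp_def] using hnd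
  · intro oe hoe
    rw [BidirGraph.reverseTrail, List.head?_reverse, List.getLast?_map] at hoe
    obtain ⟨last, hlast, rfl⟩ := Option.map_eq_some_iff.mp hoe
    rw [otail_oflip, B.trailEnd_of_getLast? hlast]
  · show List.IsChain _ _
    rw [BidirGraph.reverseTrail, List.isChain_reverse, List.isChain_map]
    refine hchain.imp fun a b hab => ⟨?_, ?_⟩
    · rw [ohead_oflip, otail_oflip, hab.1]
    · rw [ohead_oflip, ← hab.1]
      exact hab.2.symm

lemma IsRTrail.reverseTrail {B : BidirGraph V E} {r : V} {L : List (E × Bool)}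
    (h : B.IsRTrail r L) (hend : B.trailEnd r L = r) : B.IsRTrail r (reverseTrail L) := by
  obtain ⟨htrail, hint⟩ := h
  refine ⟨hend ▸ htrail.reverseTrail, fun v hv => hint v ?_⟩
  rw [B.internal_reverseTrail (htrail.2.2.imp fun _ _ h => h.1), List.mem_reverse] at hv
  exact hv

lemma IsRTrail.singleton {B : BidirGraph V E} {r : V} {a : E × Bool} {T : List (E × Bool)}
    (h : B.IsRTrail r (a :: T)) : B.IsRTrail r [a] :=
  ⟨⟨by simp, by simpa using h.1.2.1, List.isChain_singleton a⟩, by simp [Internal]⟩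

lemma trailUndirectable_of_returning_isRTrail {r : V} {a : E × Bool} {T : List (E × Bool)}
    (h : B.IsRTrail r (a :: T)) (hend : B.trailEnd r (a :: T) = r) :
    B.TrailUndirectable r a.1 := by
  have hrev : (reverseTrail (a :: T)).getLast? = some (oflip a) := getLast?_reverseTrail _
  obtain ⟨e, _ | _⟩ := a
  · exact ⟨⟨_, h.reverseTrail hend, hrev⟩, ⟨_, h.singleton, rfl⟩⟩
  · exact ⟨⟨_, h.singleton, rfl⟩, ⟨_, h.reverseTrail hend, hrev⟩⟩

lemma edgeClean_iff {r : V} :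
    B.EdgeClean r ↔ ∀ e, B.Incident e r → ¬ B.TrailUndirectable r e := by
  refine ⟨fun hclean e he hund => hclean ⟨_, ⟨e, hund, rfl⟩, e, .refl, he⟩, ?_⟩
  rintro hroot ⟨C, ⟨e, hund, rfl⟩, f, hf, hfr⟩
  refine hroot f hfr ?_
  rcases hf.cases_tail with rfl | ⟨_, _, hstep⟩
  exacts [hund, hstep.2.1]

lemma exists_returning_isRTrail_of_trailUndirectable {r : V} {e : E} (hinc : B.Incident e r)
    (hund : B.TrailUndirectable r e) :
    ∃ L : List (E × Bool), L ≠ [] ∧ B.IsRTrail r L ∧ B.trailEnd r L = r := by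
  obtain ⟨b, hb⟩ := B.exists_ohead_eq_of_incident hinc
  obtain ⟨L, hL, hlast⟩ : ∃ L, B.IsRTrail r L ∧ L.getLast? = some (e, b) := by
    cases b
    exacts [hund.2, hund.1]
  exact ⟨L, by rintro rfl; simp at hlast, hL, (B.trailEnd_of_getLast? hlast).trans hb⟩

end BidirGraph

open BidirGraph in
/-- A rooted bidirected graph is edge-clean (the root lies in no nontrivial
trail-undirectable component) iff it contains no nontrivial trail starting and ending at
`r` with no internal vertex equal to `r`. -/
theorem stmt3 {V E : Type} (B : BidirGraph V E) (r : V) :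
    B.EdgeClean r ↔
      ¬ ∃ L : List (E × Bool), L ≠ [] ∧ B.IsRTrail r L ∧ B.trailEnd r L = r := by
  rw [B.edgeClean_iff]
  constructor
  · rintro hclean ⟨_ | ⟨a, T⟩, hne, hL, hend⟩
    · exact hne rfl
    · have hinc : B.Incident a.1 r := hL.1.2.1 a rfl ▸ B.incident_otail a
      exact hclean a.1 hinc (B.trailUndirectable_of_returning_isRTrail hL hend)
  · exact fun hno e hinc hund => hno (B.exists_returning_isRTrail_of_trailUndirectable hinc hund)
end

section
/- Let B be a bidirected graph rooted at r, and let a(B) be its auxiliary graph. Then the map g_B, which contracts all auxiliary edges, is a bijection from the set of proper r-paths of a(B) to the set of r-paths of B. -/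
namespace BidirGraph

variable {V E : Type}

/-- A vertex `v ≠ r` is plain if for some sign `α` no `r`-path of `B` ends at `v` with
sign `α`. -/
def Plain (B : BidirGraph V E) (r v : V) : Prop :=
  v ≠ r ∧ ∃ α : Bool, ¬ ∃ L, B.IsPathFrom r L ∧ B.EndsAtSigned L v α

/-- Vertices of the auxiliary graph: non-plain vertices, plus two copies `v^-` (`false`)
and `v^+` (`true`) of each plain vertex `v`. -/
def AuxV (B : BidirGraph V E) (r : V) : Type :=
  {v : V // ¬ B.Plain r v} ⊕ ({v : V // B.Plain r v} × Bool)

/-- Edges of the auxiliary graph: the original edges plus one auxiliary edge per plain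
vertex. -/
def AuxE (B : BidirGraph V E) (r : V) : Type :=
  E ⊕ {v : V // B.Plain r v}

open Classical in
/-- The endpoint of an original edge `e` at a vertex `u` of `B`, viewed in the auxiliary
graph: a plain vertex `u` is replaced by the copy `u^{sign of e at u}`. -/
noncomputable def mapVtx (B : BidirGraph V E) (r : V) (e : E) (u : V) : B.AuxV r :=
  if h : B.Plain r u then Sum.inr (⟨u, h⟩, B.sign e u) else Sum.inl ⟨u, h⟩

/-- The auxiliary graph `a(B)`: each plain vertex `v` is split into `v^+` and `v^-`,
joined by an auxiliary edge with sign `+` at `v^-` and `-` at `v^+`; edges of `B` at a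
plain vertex `v` with sign `s` are reattached to `v^s` with the same sign. -/
noncomputable def auxGraph (B : BidirGraph V E) (r : V) : BidirGraph (B.AuxV r) (B.AuxE r) where
  ends := fun e => match e with
    | Sum.inl e0 => (B.mapVtx r e0 (B.ends e0).1, B.mapVtx r e0 (B.ends e0).2)
    | Sum.inr v => (Sum.inr (v, true), Sum.inr (v, false))
  sign := fun e w => match e, w with
    | Sum.inl e0, Sum.inl u => B.sign e0 u.1
    | Sum.inl _, Sum.inr w => w.2
    | Sum.inr _, Sum.inl _ => true
    | Sum.inr _, Sum.inr w => !w.2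
  loopless := by
    intro e
    match e with
    | Sum.inl e0 =>
      have h := B.loopless e0
      simp only [mapVtx]
      by_cases h1 : B.Plain r (B.ends e0).1 <;> by_cases h2 : B.Plain r (B.ends e0).2 <;>
        simp_all [AuxV]
    | Sum.inr v => simp [AuxV]

/-- The root `r` of `B`, viewed in the auxiliary graph (the root is never plain). -/
def auxRoot (B : BidirGraph V E) (r : V) : B.AuxV r :=
  Sum.inl ⟨r, fun h => h.1 rfl⟩

/-- The map `g_B`: contract all auxiliary edges of a walk in `a(B)`, obtaining a walk
in `B`. -/
def contractAux (B : BidirGraph V E) (r : V) (L : List (B.AuxE r × Bool)) :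
    List (E × Bool) :=
  L.filterMap (fun oe => match oe.1 with
    | Sum.inl e0 => some (e0, oe.2)
    | Sum.inr _ => none)

/-- A walk of `a(B)` is proper if its last edge is not an auxiliary edge. -/
def ProperLast (B : BidirGraph V E) (r : V) (L : List (B.AuxE r × Bool)) : Prop :=
  ∀ oe ∈ L.getLast?, ∃ e0 : E, oe.1 = Sum.inl e0

end BidirGraph

namespace BidirGraph

variable {V E : Type} (B : BidirGraph V E) (r : V)

-- Lets the `Sum` API act on the vertices and edges of `a(B)`.
attribute [reducible] AuxV AuxE

def Consecutive (a b : E × Bool) : Prop :=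
  B.ohead a = B.otail b ∧ B.sign a.1 (B.ohead a) ≠ B.sign b.1 (B.ohead a)

theorem ohead_eq_or_otail (e : E) (b b' : Bool) :
    B.ohead (e, b') = B.ohead (e, b) ∨ B.ohead (e, b') = B.otail (e, b) := by
  cases b <;> cases b' <;> simp [ohead, otail]

theorem nodup_edges_of_nodup_vertices {v : V} {L : List (E × Bool)}
    (hchain : L.IsChain fun a b => B.ohead a = B.otail b)
    (hstart : ∀ oe ∈ L.head?, B.otail oe = v) (hnodup : (v :: L.map B.ohead).Nodup) :
    (L.map Prod.fst).Nodup := by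
  induction L generalizing v with
  | nil => exact List.nodup_nil
  | cons oe L ih =>
    obtain ⟨hnext, hchain⟩ := List.isChain_cons.1 hchain
    obtain ⟨hv, hnodup⟩ := List.nodup_cons.1 hnodup
    refine List.nodup_cons.2 ⟨fun he => ?_, ih hchain (fun oe' h => (hnext oe' h).symm) hnodup⟩
    obtain ⟨⟨e, b'⟩, hmem, he⟩ := List.mem_map.1 he
    obtain rfl : e = oe.1 := he
    have hhead : B.ohead (oe.1, b') ∈ L.map B.ohead := List.mem_map_of_mem hmem
    rcases B.ohead_eq_or_otail oe.1 oe.2 b' with h | h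
    · exact (List.nodup_cons.1 hnodup).1 (h ▸ hhead)
    · exact hv (List.mem_cons_of_mem _ (hstart oe rfl ▸ h ▸ hhead))

theorem isPathFrom_iff (v : V) (L : List (E × Bool)) :
    B.IsPathFrom v L ↔
      (∀ oe ∈ L.head?, B.otail oe = v) ∧ L.IsChain B.Consecutive ∧
        (v :: L.map B.ohead).Nodup :=
  ⟨fun ⟨⟨_, hstart, hchain⟩, hnodup⟩ => ⟨hstart, hchain, hnodup⟩,
    fun ⟨hstart, hchain, hnodup⟩ =>
      ⟨⟨B.nodup_edges_of_nodup_vertices (hchain.imp fun _ _ h => h.1) hstart hnodup,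
        hstart, hchain⟩, hnodup⟩⟩

def auxBase : B.AuxV r → V
  | Sum.inl u => u.1
  | Sum.inr w => w.1.1

theorem not_plain_root : ¬ B.Plain r r := fun h => h.1 rfl

section AuxGraph

variable {B r}

theorem mapVtx_of_plain {e : E} {u : V} (h : B.Plain r u) :
    B.mapVtx r e u = Sum.inr (⟨u, h⟩, B.sign e u) :=
  dif_pos h

theorem mapVtx_of_not_plain {e : E} {u : V} (h : ¬ B.Plain r u) :
    B.mapVtx r e u = Sum.inl ⟨u, h⟩ :=
  dif_neg h

@[simp] theorem auxBase_mapVtx (e : E) (u : V) : B.auxBase r (B.mapVtx r e u) = u := by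
  by_cases h : B.Plain r u
  · rw [mapVtx_of_plain h]; rfl
  · rw [mapVtx_of_not_plain h]; rfl

theorem auxBase_eq_iff_of_not_plain {v : V} (h : ¬ B.Plain r v) {x : B.AuxV r} :
    B.auxBase r x = v ↔ x = Sum.inl ⟨v, h⟩ := by
  refine ⟨fun hx => ?_, fun hx => hx ▸ rfl⟩
  rcases x with ⟨u, hu⟩ | ⟨⟨u, hu⟩, c⟩
  · obtain rfl : u = v := hx; rfl
  · obtain rfl : u = v := hx; exact absurd hu h

theorem auxBase_eq_iff_of_plain {v : V} (h : B.Plain r v) {x : B.AuxV r} :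
    B.auxBase r x = v ↔ ∃ c, x = Sum.inr (⟨v, h⟩, c) := by
  refine ⟨fun hx => ?_, fun ⟨c, hx⟩ => hx ▸ rfl⟩
  rcases x with ⟨u, hu⟩ | ⟨⟨u, hu⟩, c⟩
  · obtain rfl : u = v := hx; exact absurd h hu
  · obtain rfl : u = v := hx; exact ⟨c, rfl⟩

theorem eq_auxRoot_iff {x : B.AuxV r} : x = B.auxRoot r ↔ B.auxBase r x = r :=
  (auxBase_eq_iff_of_not_plain (B.not_plain_root r)).symm

theorem mapVtx_eq_inr_iff {e : E} {u : V} {v : {v : V // B.Plain r v}} {c : Bool} :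
    B.mapVtx r e u = Sum.inr (v, c) ↔ u = v.1 ∧ B.sign e u = c := by
  by_cases h : B.Plain r u
  · rw [mapVtx_of_plain h]
    constructor
    · intro h'; cases h'; exact ⟨rfl, rfl⟩
    · rintro ⟨rfl, rfl⟩; rfl
  · rw [mapVtx_of_not_plain h]
    exact ⟨nofun, fun ⟨hu, _⟩ => absurd (hu ▸ v.2) h⟩

theorem mapVtx_eq_mapVtx_iff {e e' : E} {u u' : V} :
    B.mapVtx r e u = B.mapVtx r e' u' ↔
      u = u' ∧ (B.Plain r u → B.sign e u = B.sign e' u) := by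
  by_cases h : B.Plain r u
  · rw [mapVtx_of_plain h, eq_comm, mapVtx_eq_inr_iff]
    constructor
    · rintro ⟨rfl, hs⟩; exact ⟨rfl, fun _ => hs.symm⟩
    · rintro ⟨rfl, hs⟩; exact ⟨rfl, (hs h).symm⟩
  · constructor
    · intro h'
      have := congrArg (B.auxBase r) h'
      simp only [auxBase_mapVtx] at this
      exact ⟨this, fun hp => absurd hp h⟩
    · rintro ⟨rfl, -⟩
      rw [mapVtx_of_not_plain h, mapVtx_of_not_plain h]

@[simp] theorem aux_ohead_inl (e : E) (b : Bool) :
    (B.auxGraph r).ohead (Sum.inl e, b) = B.mapVtx r e (B.ohead (e, b)) := by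
  cases b <;> rfl

@[simp] theorem aux_otail_inl (e : E) (b : Bool) :
    (B.auxGraph r).otail (Sum.inl e, b) = B.mapVtx r e (B.otail (e, b)) := by
  cases b <;> rfl

@[simp] theorem aux_ohead_inr (v : {v : V // B.Plain r v}) (b : Bool) :
    (B.auxGraph r).ohead (Sum.inr v, b) = Sum.inr (v, !b) := by
  cases b <;> rfl

@[simp] theorem aux_otail_inr (v : {v : V // B.Plain r v}) (b : Bool) :
    (B.auxGraph r).otail (Sum.inr v, b) = Sum.inr (v, b) := by
  cases b <;> rfl

@[simp] theorem aux_sign_inl_mapVtx (e : E) (u : V) :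
    (B.auxGraph r).sign (Sum.inl e) (B.mapVtx r e u) = B.sign e u := by
  by_cases h : B.Plain r u
  · rw [mapVtx_of_plain h]; rfl
  · rw [mapVtx_of_not_plain h]; rfl

@[simp] theorem aux_sign_inr_inr (v : {v : V // B.Plain r v})
    (w : {v : V // B.Plain r v} × Bool) :
    (B.auxGraph r).sign (Sum.inr v) (Sum.inr w) = !w.2 := rfl

theorem aux_consecutive_inl_inl {oe oe' : E × Bool} :
    (B.auxGraph r).Consecutive (Sum.inl oe.1, oe.2) (Sum.inl oe'.1, oe'.2) ↔
      ¬ B.Plain r (B.ohead oe) ∧ B.Consecutive oe oe' := by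
  simp only [Consecutive, aux_ohead_inl, aux_otail_inl, Prod.mk.eta, aux_sign_inl_mapVtx]
  constructor
  · rintro ⟨heq, hne⟩
    obtain ⟨hv, hs⟩ := mapVtx_eq_mapVtx_iff.1 heq
    rw [heq, aux_sign_inl_mapVtx, ← hv] at hne
    exact ⟨fun hp => hne (hs hp), hv, hne⟩
  · rintro ⟨hnp, hv, hne⟩
    have heq : B.mapVtx r oe.1 (B.ohead oe) = B.mapVtx r oe'.1 (B.otail oe') :=
      mapVtx_eq_mapVtx_iff.2 ⟨hv, fun hp => absurd hp hnp⟩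
    refine ⟨heq, ?_⟩
    rwa [heq, aux_sign_inl_mapVtx, ← hv]

theorem aux_consecutive_inl_inr {oe : E × Bool} {v : {v : V // B.Plain r v}} {c : Bool} :
    (B.auxGraph r).Consecutive (Sum.inl oe.1, oe.2) (Sum.inr v, c) ↔
      B.ohead oe = v.1 ∧ B.sign oe.1 (B.ohead oe) = c := by
  simp only [Consecutive, aux_ohead_inl, aux_otail_inr, Prod.mk.eta, mapVtx_eq_inr_iff]
  refine ⟨And.left, fun h => ⟨h, ?_⟩⟩
  rw [aux_sign_inl_mapVtx, mapVtx_eq_inr_iff.2 h, aux_sign_inr_inr, h.2]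
  exact Bool.not_ne_self c |>.symm

theorem aux_consecutive_inr_inl {oe : E × Bool} {v : {v : V // B.Plain r v}} {c : Bool} :
    (B.auxGraph r).Consecutive (Sum.inr v, c) (Sum.inl oe.1, oe.2) ↔
      B.otail oe = v.1 ∧ B.sign oe.1 (B.otail oe) = !c := by
  simp only [Consecutive, aux_ohead_inr, aux_otail_inl, Prod.mk.eta]
  rw [eq_comm, mapVtx_eq_inr_iff]
  refine ⟨And.left, fun h => ⟨h, ?_⟩⟩
  rw [← mapVtx_eq_inr_iff.2 h, aux_sign_inl_mapVtx, h.2, mapVtx_eq_inr_iff.2 h]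
  simp

theorem not_aux_consecutive_inr_inr {v v' : {v : V // B.Plain r v}} {c c' : Bool} :
    ¬ (B.auxGraph r).Consecutive (Sum.inr v, c) (Sum.inr v', c') := by
  simp [Consecutive]

end AuxGraph

open Classical in
noncomputable def liftStep (oe : E × Bool) : List (B.AuxE r × Bool) :=
  (Sum.inl oe.1, oe.2) ::
    if h : B.Plain r (B.ohead oe) then
      [(Sum.inr ⟨B.ohead oe, h⟩, B.sign oe.1 (B.ohead oe))]
    else []

noncomputable def liftPath : List (E × Bool) → List (B.AuxE r × Bool)
  | [] => []
  | [oe] => [(Sum.inl oe.1, oe.2)]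
  | oe :: oe' :: rest => B.liftStep r oe ++ liftPath (oe' :: rest)

section Lift

variable {B r}

theorem liftStep_of_plain {oe : E × Bool} (h : B.Plain r (B.ohead oe)) :
    B.liftStep r oe =
      [(Sum.inl oe.1, oe.2), (Sum.inr ⟨B.ohead oe, h⟩, B.sign oe.1 (B.ohead oe))] := by
  simp [liftStep, h]

theorem liftStep_of_not_plain {oe : E × Bool} (h : ¬ B.Plain r (B.ohead oe)) :
    B.liftStep r oe = [(Sum.inl oe.1, oe.2)] := by
  simp [liftStep, h]

@[simp] theorem contractAux_cons_inl (e : E) (b : Bool) (L : List (B.AuxE r × Bool)) :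
    B.contractAux r ((Sum.inl e, b) :: L) = (e, b) :: B.contractAux r L := rfl

@[simp] theorem contractAux_cons_inr (v : {v : V // B.Plain r v}) (b : Bool)
    (L : List (B.AuxE r × Bool)) :
    B.contractAux r ((Sum.inr v, b) :: L) = B.contractAux r L := rfl

@[simp] theorem contractAux_liftStep_append (oe : E × Bool) (L : List (B.AuxE r × Bool)) :
    B.contractAux r (B.liftStep r oe ++ L) = oe :: B.contractAux r L := by
  unfold liftStep; split <;> rfl

theorem contractAux_liftPath : ∀ M : List (E × Bool), B.contractAux r (B.liftPath r M) = M
  | [] => rfl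
  | [_] => rfl
  | oe :: oe' :: rest => by
    rw [liftPath, contractAux_liftStep_append, contractAux_liftPath (oe' :: rest)]

theorem liftPath_cons (oe : E × Bool) (M : List (E × Bool)) :
    ∃ T, B.liftPath r (oe :: M) = (Sum.inl oe.1, oe.2) :: T := by
  cases M <;> simp [liftPath, liftStep]

theorem properLast_liftPath : ∀ M : List (E × Bool), B.ProperLast r (B.liftPath r M)
  | [] => nofun
  | [oe] => by rintro _ ⟨⟩; exact ⟨oe.1, rfl⟩
  | oe :: oe' :: rest => by
    obtain ⟨T, hT⟩ := liftPath_cons (B := B) (r := r) oe' rest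
    intro x hx
    rw [liftPath, List.getLast?_append_of_ne_nil _ (by simp [hT])] at hx
    exact properLast_liftPath (oe' :: rest) x hx

theorem isChain_liftPath_iff : ∀ M : List (E × Bool),
    (B.liftPath r M).IsChain (B.auxGraph r).Consecutive ↔ M.IsChain B.Consecutive
  | [] => by simp [liftPath]
  | [oe] => by simp [liftPath]
  | oe :: oe' :: rest => by
    obtain ⟨T, hT⟩ := liftPath_cons (B := B) (r := r) oe' rest
    have ih := isChain_liftPath_iff (oe' :: rest)
    rw [hT] at ih
    rw [liftPath, hT, List.isChain_cons_cons (b := oe'), ← ih]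
    by_cases hp : B.Plain r (B.ohead oe)
    · rw [liftStep_of_plain hp, List.cons_append, List.cons_append, List.nil_append,
        List.isChain_cons_cons, List.isChain_cons_cons, aux_consecutive_inl_inr,
        aux_consecutive_inr_inl]
      simp only [Consecutive]
      grind
    · rw [liftStep_of_not_plain hp, List.cons_append, List.nil_append,
        List.isChain_cons_cons, aux_consecutive_inl_inl]
      simp [hp]

theorem head?_liftPath (M : List (E × Bool)) :
    (B.liftPath r M).head? = M.head?.map fun oe => (Sum.inl oe.1, oe.2) := by
  cases M with
  | nil => rfl
  | cons oe M => obtain ⟨T, hT⟩ := liftPath_cons (B := B) (r := r) oe M; simp [hT]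

theorem mem_heads_liftStep_iff {oe : E × Bool} {x : B.AuxV r} :
    x ∈ (B.liftStep r oe).map (B.auxGraph r).ohead ↔ B.auxBase r x = B.ohead oe := by
  by_cases hp : B.Plain r (B.ohead oe)
  · rw [liftStep_of_plain hp, auxBase_eq_iff_of_plain hp]
    simp only [List.map_cons, List.map_nil, List.mem_cons, List.not_mem_nil, or_false,
      aux_ohead_inl, aux_ohead_inr, Prod.mk.eta, mapVtx_of_plain hp]
    generalize B.sign oe.1 (B.ohead oe) = s
    cases s <;> simp [or_comm]
  · rw [liftStep_of_not_plain hp, auxBase_eq_iff_of_not_plain hp]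
    simp [mapVtx_of_not_plain hp]

theorem nodup_heads_liftStep (oe : E × Bool) :
    ((B.liftStep r oe).map (B.auxGraph r).ohead).Nodup := by
  by_cases hp : B.Plain r (B.ohead oe)
  · simp [liftStep_of_plain hp, mapVtx_of_plain hp]
  · simp [liftStep_of_not_plain hp]

theorem exists_mem_heads_liftPath_iff (v : V) : ∀ M : List (E × Bool),
    (∃ x ∈ (B.liftPath r M).map (B.auxGraph r).ohead, B.auxBase r x = v) ↔ v ∈ M.map B.ohead
  | [] => by simp [liftPath]
  | [oe] => by simp [liftPath, eq_comm]
  | oe :: oe' :: rest => by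
    have hstep : (∃ x ∈ (B.liftStep r oe).map (B.auxGraph r).ohead, B.auxBase r x = v) ↔
        v = B.ohead oe := by
      simp only [mem_heads_liftStep_iff]
      exact ⟨fun ⟨x, hx, hxv⟩ => hxv.symm.trans hx,
        fun h => ⟨B.mapVtx r oe.1 (B.ohead oe), by simp [h]⟩⟩
    rw [liftPath, List.map_append, List.map_cons]
    simp only [List.mem_append, or_and_right, exists_or, hstep,
      exists_mem_heads_liftPath_iff v (oe' :: rest), List.mem_cons]

theorem nodup_heads_liftPath_iff : ∀ M : List (E × Bool),
    ((B.liftPath r M).map (B.auxGraph r).ohead).Nodup ↔ (M.map B.ohead).Nodup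
  | [] => by simp [liftPath]
  | [oe] => by simp [liftPath]
  | oe :: oe' :: rest => by
    rw [liftPath, List.map_append, List.nodup_append, List.map_cons, List.nodup_cons,
      ← nodup_heads_liftPath_iff (oe' :: rest),
      ← exists_mem_heads_liftPath_iff (r := r) (B.ohead oe) (oe' :: rest)]
    simp only [nodup_heads_liftStep, true_and, mem_heads_liftStep_iff]
    grind

theorem nodup_root_heads_liftPath_iff (M : List (E × Bool)) :
    (B.auxRoot r :: (B.liftPath r M).map (B.auxGraph r).ohead).Nodup ↔
      (r :: M.map B.ohead).Nodup := by
  rw [List.nodup_cons, List.nodup_cons, nodup_heads_liftPath_iff,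
    ← exists_mem_heads_liftPath_iff (r := r) r M]
  simp only [← eq_auxRoot_iff, exists_eq_right]

theorem isPathFrom_liftPath_iff (M : List (E × Bool)) :
    (B.auxGraph r).IsPathFrom (B.auxRoot r) (B.liftPath r M) ↔ B.IsPathFrom r M := by
  rw [isPathFrom_iff, isPathFrom_iff, head?_liftPath, isChain_liftPath_iff,
    nodup_root_heads_liftPath_iff]
  cases M <;> simp [eq_auxRoot_iff]

theorem liftPath_contractAux_cons_inl (e : E) (b : Bool) : ∀ T : List (B.AuxE r × Bool),
    ((Sum.inl e, b) :: T).IsChain (B.auxGraph r).Consecutive →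
    B.ProperLast r ((Sum.inl e, b) :: T) →
    B.liftPath r (B.contractAux r ((Sum.inl e, b) :: T)) = (Sum.inl e, b) :: T
  | [], _, _ => rfl
  | (Sum.inl e', b') :: T, hchain, hproper => by
    obtain ⟨hc, hchain⟩ := List.isChain_cons_cons.1 hchain
    have hp := (aux_consecutive_inl_inl (oe := (e, b)) (oe' := (e', b'))).1 hc |>.1
    have ih := liftPath_contractAux_cons_inl e' b' T hchain
      fun x hx => hproper x (by simpa using hx)
    rw [contractAux_cons_inl, contractAux_cons_inl, liftPath, liftStep_of_not_plain hp,
      ← contractAux_cons_inl, ih]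
    rfl
  | [(Sum.inr v, c)], _, hproper => by
    obtain ⟨_, h⟩ := hproper _ rfl
    cases h
  | (Sum.inr v, c) :: (Sum.inr v', c') :: T, hchain, _ =>
    absurd (List.isChain_cons_cons.1 (List.isChain_cons_cons.1 hchain).2).1
      not_aux_consecutive_inr_inr
  | (Sum.inr v, c) :: (Sum.inl e', b') :: T, hchain, hproper => by
    obtain ⟨hc, hchain⟩ := List.isChain_cons_cons.1 hchain
    obtain ⟨hv, hs⟩ := (aux_consecutive_inl_inr (oe := (e, b))).1 hc
    have hp : B.Plain r (B.ohead (e, b)) := hv ▸ v.2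
    have hstep : B.liftStep r (e, b) = [(Sum.inl e, b), (Sum.inr v, c)] := by
      rw [liftStep_of_plain hp, ← hs]
      congr
    have ih := liftPath_contractAux_cons_inl e' b' T (List.isChain_cons_cons.1 hchain).2
      fun x hx => hproper x (by simpa using hx)
    rw [contractAux_cons_inl, contractAux_cons_inr, contractAux_cons_inl, liftPath, hstep,
      ← contractAux_cons_inl, ih]
    rfl

theorem liftPath_contractAux_of_isPathFrom {L : List (B.AuxE r × Bool)}
    (hpath : (B.auxGraph r).IsPathFrom (B.auxRoot r) L) (hproper : B.ProperLast r L) :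
    B.liftPath r (B.contractAux r L) = L := by
  rcases L with _ | ⟨⟨e | v, b⟩, T⟩
  · rfl
  · exact liftPath_contractAux_cons_inl e b T hpath.1.2.2 hproper
  · have := hpath.1.2.1 _ rfl
    simp [auxRoot] at this

end Lift

end BidirGraph

open BidirGraph in
/-- the contraction map `g_B` is a bijection from the set of proper
`r`-paths of the auxiliary graph `a(B)` onto the set of `r`-paths of `B`. -/
theorem stmt15 {V E : Type} (B : BidirGraph V E) (r : V) :
    Set.BijOn (B.contractAux r)
      {L | (B.auxGraph r).IsPathFrom (B.auxRoot r) L ∧ B.ProperLast r L}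
      {L | B.IsPathFrom r L} := by
  have hleft : Set.LeftInvOn (B.liftPath r) (B.contractAux r)
      {L | (B.auxGraph r).IsPathFrom (B.auxRoot r) L ∧ B.ProperLast r L} :=
    fun _ hL => liftPath_contractAux_of_isPathFrom hL.1 hL.2
  refine Set.InvOn.bijOn ⟨hleft, fun M _ => contractAux_liftPath M⟩ ?_ ?_
  · intro L hL
    show B.IsPathFrom r _
    rw [← isPathFrom_liftPath_iff, hleft hL]
    exact hL.1
  · exact fun M hM => ⟨(isPathFrom_liftPath_iff M).2 hM, properLast_liftPath M⟩
end
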